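/- Let E be an elliptic curve over a field k of characteristic zero such that for every prime ℓ the image of the mod-ℓ Galois representation ρ_ℓ: Gal(k̄/k) → GL₂(ℤ/ℓ) contains SL₂⁺(ℤ/ℓ). Then every finite Galois-submodule M of E(k̄) is equal to E[m] for some integer m ≥ 1. In particular the group E(k) of rational points is torsion-free. -/

import Mathlib

/-!
For a prime `ℓ`, `SL₂⁺(ℤ/ℓ)` acts transitively on the nonzero vectors of `(ℤ/ℓ)²`, so the Galois
group acts transitively on the points of exact order `ℓ`. Hence a Galois-stable subgroup `M`
containing a point of order `ℓ` contains all of `E[ℓ]`. By induction on the order `n = ℓ m`, a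
stable `M` containing a point of order `n` contains `E[n]`: apply the induction hypothesis to
`ℓ M`, then correct by `E[ℓ] ≤ M`. A finite `M` has a point whose order is its exponent, so
`M = E[exponent M]`. Finally, a nonzero rational torsion point would have a multiple of prime
order `ℓ` fixed by the whole Galois group, while no nonzero point of `E[ℓ]` is.
-/

set_option synthInstance.maxHeartbeats 1000000
open Matrix

instance slSMul (n : ℕ) : SMul (SpecialLinearGroup (Fin 2) (ZMod n)) (Fin 2 → ZMod n) :=
  ⟨fun g v => (g : Matrix (Fin 2) (Fin 2) (ZMod n)).mulVec v⟩

lemma slAct_def {n : ℕ} (g : SpecialLinearGroup (Fin 2) (ZMod n)) (v : Fin 2 → ZMod n) :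
    g • v = (g : Matrix (Fin 2) (Fin 2) (ZMod n)).mulVec v := rfl

/-- The tautological action of `SL₂(ℤ/n)` on `(ℤ/n)²`. -/
instance slAct (n : ℕ) : DistribMulAction (SpecialLinearGroup (Fin 2) (ZMod n)) (Fin 2 → ZMod n) where
  one_smul v := by rw [slAct_def]; simp
  mul_smul g h v := by
    rw [slAct_def, slAct_def, slAct_def, Matrix.mulVec_mulVec]; rfl
  smul_zero g := Matrix.mulVec_zero _
  smul_add g x y := Matrix.mulVec_add _ x y

/-- The action of `SL₂(ℤ/2)` on the three nonzero vectors of `(ℤ/2)²`. -/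
instance nzAct : MulAction (SpecialLinearGroup (Fin 2) (ZMod 2)) {v : Fin 2 → ZMod 2 // v ≠ 0} where
  smul g v := ⟨g • (v : Fin 2 → ZMod 2), fun h => v.2 (by
    have := congrArg (fun w => g⁻¹ • w) h
    simpa [smul_smul] using this)⟩
  one_smul v := Subtype.ext (one_smul _ (v : Fin 2 → ZMod 2))
  mul_smul g h v := Subtype.ext (mul_smul g h (v : Fin 2 → ZMod 2))

/-- The sign character of `SL₂(ℤ/2) ≅ S₃`, via the permutation action on
the three nonzero vectors of `(ℤ/2)²`. -/
noncomputable def signChar : SpecialLinearGroup (Fin 2) (ZMod 2) →* ℤˣ :=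
  Equiv.Perm.sign.comp
    (MulAction.toPermHom (SpecialLinearGroup (Fin 2) (ZMod 2)) {v : Fin 2 → ZMod 2 // v ≠ 0})

/-- `SL₂⁺(ℤ/n)`: all of `SL₂(ℤ/n)` for odd `n`; for even `n` the kernel of the composition of
reduction mod 2 with the sign character `SL₂(ℤ/2) ≅ S₃ → {±1}`. -/
noncomputable def SL2Plus (n : ℕ) : Subgroup (SpecialLinearGroup (Fin 2) (ZMod n)) :=
  if h : 2 ∣ n then
    (signChar.comp (SpecialLinearGroup.map (ZMod.castHom h (ZMod 2)))).ker
  else ⊤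
set_option maxHeartbeats 1000000
open WeierstrassCurve WeierstrassCurve.Affine
open scoped Classical

/-- The `n`-torsion subgroup of an abelian group. -/
def torsionSub (A : Type*) [AddCommGroup A] (n : ℕ) : AddSubgroup A where
  carrier := {x | n • x = 0}
  zero_mem' := by simp
  add_mem' := by
    intro a b ha hb
    simp only [Set.mem_setOf_eq, smul_add] at *
    rw [ha, hb, add_zero]
  neg_mem' := by
    intro a ha
    simp only [Set.mem_setOf_eq, smul_neg] at *
    rw [ha, neg_zero]

variable {k : Type*} [Field k] {K : Type*} [Field K] [Algebra k K]

/-- The action of a `k`-automorphism `σ` of `K` on the `K`-points of a Weierstrass curve `W`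
defined over `k`. -/
noncomputable def galHom (W : WeierstrassCurve k) (σ : K ≃ₐ[k] K) : WeierstrassCurve.Affine.Point (W.baseChange K) →+ WeierstrassCurve.Affine.Point (W.baseChange K) :=
  WeierstrassCurve.Affine.Point.map (W' := W) σ.toAlgHom

/-- The Galois action preserves `n`-torsion. -/
noncomputable def torsionGal (W : WeierstrassCurve k) (σ : K ≃ₐ[k] K) (n : ℕ)
    (P : torsionSub (WeierstrassCurve.Affine.Point (W.baseChange K)) n) : torsionSub (WeierstrassCurve.Affine.Point (W.baseChange K)) n :=
  ⟨galHom W σ P.1, by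
    have h : n • (P : WeierstrassCurve.Affine.Point (W.baseChange K)) = 0 := P.2
    show n • galHom W σ P.1 = 0
    rw [← map_nsmul, h, map_zero]⟩

section SL2

def sl2TwoCycle : SpecialLinearGroup (Fin 2) (ZMod 2) := ⟨!![0, 1; 1, 1], by decide⟩

-- Being of order 3, it lies in the kernel of every character with values in `ℤˣ = {±1}`.
lemma sl2TwoCycle_mem_SL2Plus : sl2TwoCycle ∈ SL2Plus 2 := by
  rw [SL2Plus, dif_pos (dvd_refl 2), MonoidHom.mem_ker]
  set u := (signChar.comp (SpecialLinearGroup.map (ZMod.castHom (dvd_refl 2) (ZMod 2))))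
    sl2TwoCycle
  have hu3 : u ^ 3 = 1 := by
    rw [← map_pow, show sl2TwoCycle ^ 3 = 1 from Subtype.ext (by decide), map_one]
  calc u = u ^ 3 * (u ^ 2)⁻¹ := by group
    _ = 1 := by rw [hu3, Int.units_sq, inv_one, one_mul]

lemma exists_pow_sl2TwoCycle_smul_eq :
    ∀ v w : Fin 2 → ZMod 2, v ≠ 0 → w ≠ 0 → ∃ j : Fin 3, sl2TwoCycle ^ (j : ℕ) • v = w := by
  decide

lemma exists_smul_eq_of_ne_zero {ℓ : ℕ} [Fact ℓ.Prime] {v : Fin 2 → ZMod ℓ} (hv : v ≠ 0) :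
    ∃ g : SpecialLinearGroup (Fin 2) (ZMod ℓ), g • ![1, 0] = v := by
  by_cases h0 : v 0 = 0
  · have h1 : v 1 ≠ 0 := fun h1 => hv (funext fun i => by fin_cases i <;> assumption)
    refine ⟨⟨!![0, -(v 1)⁻¹; v 1, 0], by simp [Matrix.det_fin_two_of, h1]⟩, ?_⟩
    show _ *ᵥ _ = v; ext i; fin_cases i <;> simp [h0]
  · refine ⟨⟨!![v 0, 0; v 1, (v 0)⁻¹], by simp [Matrix.det_fin_two_of, h0]⟩, ?_⟩
    show _ *ᵥ _ = v; ext i; fin_cases i <;> simp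

lemma exists_mem_SL2Plus_smul_eq {ℓ : ℕ} (hℓ : ℓ.Prime) {v w : Fin 2 → ZMod ℓ} (hv : v ≠ 0)
    (hw : w ≠ 0) : ∃ A ∈ SL2Plus ℓ, A • v = w := by
  by_cases h2 : 2 ∣ ℓ
  · obtain rfl : ℓ = 2 := ((Nat.prime_dvd_prime_iff_eq Nat.prime_two hℓ).1 h2).symm
    obtain ⟨j, hj⟩ := exists_pow_sl2TwoCycle_smul_eq v w hv hw
    exact ⟨_, pow_mem sl2TwoCycle_mem_SL2Plus j, hj⟩
  · have := Fact.mk hℓ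
    obtain ⟨gv, rfl⟩ := exists_smul_eq_of_ne_zero hv
    obtain ⟨gw, rfl⟩ := exists_smul_eq_of_ne_zero hw
    refine ⟨gw * gv⁻¹, by rw [SL2Plus, dif_neg h2]; trivial, ?_⟩
    rw [mul_smul, inv_smul_smul]

lemma exists_fin_two_ne_zero_ne {ℓ : ℕ} [Fact ℓ.Prime] (v : Fin 2 → ZMod ℓ) :
    ∃ w : Fin 2 → ZMod ℓ, w ≠ 0 ∧ w ≠ v := by
  by_cases hv : v = ![1, 0]
  · exact ⟨![0, 1], fun h => one_ne_zero (congrFun h 1),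
      fun h => by simpa using congrFun (h.trans hv) 1⟩
  · exact ⟨![1, 0], fun h => one_ne_zero (congrFun h 0), Ne.symm hv⟩

end SL2

section PrimeTorsion

variable {A ι : Type*} [AddCommGroup A]

lemma mem_torsionSub {n : ℕ} {x : A} : x ∈ torsionSub A n ↔ n • x = 0 := Iff.rfl

def IsTransitiveOnPrimeTorsion (f : ι → A →+ A) : Prop :=
  ∀ ℓ : ℕ, ℓ.Prime → ∀ P Q : A, addOrderOf P = ℓ → addOrderOf Q = ℓ → ∃ i, f i P = Q

def AddSubgroup.IsStableUnder (M : AddSubgroup A) (f : ι → A →+ A) : Prop :=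
  ∀ i, ∀ P ∈ M, f i P ∈ M

variable {f : ι → A →+ A} {M : AddSubgroup A}

lemma AddSubgroup.IsStableUnder.map_nsmul (hM : M.IsStableUnder f) (n : ℕ) :
    (M.map (nsmulAddMonoidHom n)).IsStableUnder f := by
  rintro i _ ⟨P, hPM, rfl⟩
  exact ⟨f i P, hM i P hPM, (_root_.map_nsmul (f i) n P).symm⟩

lemma torsionSub_le_of_addOrderOf_eq_prime (htr : IsTransitiveOnPrimeTorsion f)
    (hM : M.IsStableUnder f) {ℓ : ℕ} (hℓ : ℓ.Prime) {P : A} (hPM : P ∈ M)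
    (hP : addOrderOf P = ℓ) : torsionSub A ℓ ≤ M := by
  intro Q hQ
  rcases eq_or_ne Q 0 with rfl | hQ0
  · exact M.zero_mem
  have := Fact.mk hℓ
  obtain ⟨i, rfl⟩ := htr ℓ hℓ P Q hP (addOrderOf_eq_prime hQ hQ0)
  exact hM i P hPM

lemma torsionSub_addOrderOf_le (htr : IsTransitiveOnPrimeTorsion f)
    (hM : M.IsStableUnder f) {P : A} (hPM : P ∈ M) (hP : IsOfFinAddOrder P) :
    torsionSub A (addOrderOf P) ≤ M := by
  induction hn : addOrderOf P using Nat.strong_induction_on generalizing M P with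
  | _ n ih =>
  have hn0 : n ≠ 0 := hn ▸ hP.addOrderOf_pos.ne'
  rcases eq_or_ne n 1 with rfl | hn1
  · intro Q hQ
    rw [mem_torsionSub, one_nsmul] at hQ
    exact hQ ▸ M.zero_mem
  set ℓ := n.minFac
  have hℓ : ℓ.Prime := Nat.minFac_prime hn1
  have hℓn : ℓ ∣ n := Nat.minFac_dvd n
  have hEℓ : torsionSub A ℓ ≤ M :=
    torsionSub_le_of_addOrderOf_eq_prime htr hM hℓ (M.nsmul_mem hPM (n / ℓ))
      (hn ▸ addOrderOf_nsmul_addOrderOf_sub (hn ▸ hn0) (hn ▸ hℓn))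
  have hℓP : addOrderOf (ℓ • P) = n / ℓ := by
    rw [addOrderOf_nsmul_of_dvd hℓ.ne_zero (hn ▸ hℓn), hn]
  have hEm : torsionSub A (n / ℓ) ≤ M.map (nsmulAddMonoidHom ℓ) :=
    hℓP ▸ ih (n / ℓ) (Nat.div_lt_self (Nat.pos_of_ne_zero hn0) hℓ.one_lt)
      (hM.map_nsmul ℓ) ⟨P, hPM, rfl⟩ hP.nsmul hℓP
  intro Q hQ
  obtain ⟨R, hRM, hRQ⟩ := hEm (show (n / ℓ) • ℓ • Q = 0 by
    rwa [smul_smul, Nat.div_mul_cancel hℓn])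
  have hQR : Q - R ∈ M := hEℓ (show ℓ • (Q - R) = 0 by
    rw [nsmul_sub, sub_eq_zero]; exact hRQ.symm)
  simpa using M.add_mem hQR hRM

lemma eq_torsionSub_exponent (htr : IsTransitiveOnPrimeTorsion f)
    (hM : M.IsStableUnder f) [Finite M] : M = torsionSub A (AddMonoid.exponent M) := by
  obtain ⟨P, hP⟩ :=
    AddMonoid.exists_addOrderOf_eq_exponent (AddMonoid.ExponentExists.of_finite (G := M))
  refine le_antisymm (fun Q hQ => ?_) ?_
  · rw [mem_torsionSub]
    simpa using congrArg Subtype.val (AddMonoid.exponent_nsmul_eq_zero (⟨Q, hQ⟩ : M))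
  · rw [← hP, ← AddSubgroup.addOrderOf_coe]
    exact torsionSub_addOrderOf_le htr hM P.2
      (M.subtype.isOfFinAddOrder (isOfFinAddOrder_of_finite P))

end PrimeTorsion

section Curve

variable (E : WeierstrassCurve k)

variable (K) in
def GaloisImageContainsSL2Plus (ℓ : ℕ) : Prop :=
  ∃ e : torsionSub (Point (E.baseChange K)) ℓ ≃+ (Fin 2 → ZMod ℓ),
    ∀ A ∈ SL2Plus ℓ, ∃ σ : K ≃ₐ[k] K, ∀ P, e (torsionGal E σ ℓ P) = A • e P

variable {E}

lemma exists_galHom_eq {ℓ : ℕ} (hℓ : ℓ.Prime) (h : GaloisImageContainsSL2Plus K E ℓ)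
    {P Q : Point (E.baseChange K)} (hP : addOrderOf P = ℓ) (hQ : addOrderOf Q = ℓ) :
    ∃ σ, galHom E σ P = Q := by
  obtain ⟨e, he⟩ := h
  let P' : torsionSub _ ℓ := ⟨P, hP ▸ addOrderOf_nsmul_eq_zero P⟩
  let Q' : torsionSub _ ℓ := ⟨Q, hQ ▸ addOrderOf_nsmul_eq_zero Q⟩
  have hne : ∀ R : torsionSub (Point (E.baseChange K)) ℓ,
      addOrderOf (R : Point (E.baseChange K)) = ℓ → e R ≠ 0 := by
    intro R hR h0
    rw [e.map_eq_zero_iff.1 h0, ZeroMemClass.coe_zero, addOrderOf_zero] at hR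
    exact hℓ.ne_one hR.symm
  obtain ⟨A, hA, hAPQ⟩ := exists_mem_SL2Plus_smul_eq hℓ (hne P' hP) (hne Q' hQ)
  obtain ⟨σ, hσ⟩ := he A hA
  exact ⟨σ, congrArg Subtype.val (e.injective ((hσ P').trans hAPQ))⟩

lemma isTransitiveOnPrimeTorsion_galHom
    (hρ : ∀ ℓ : ℕ, ℓ.Prime → GaloisImageContainsSL2Plus K E ℓ) :
    IsTransitiveOnPrimeTorsion (galHom E (K := K)) :=
  fun ℓ hℓ _ _ => exists_galHom_eq hℓ (hρ ℓ hℓ)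

lemma exists_galHom_ne {ℓ : ℕ} (hℓ : ℓ.Prime) (h : GaloisImageContainsSL2Plus K E ℓ)
    {P : Point (E.baseChange K)} (hP : addOrderOf P = ℓ) : ∃ σ, galHom E σ P ≠ P := by
  have := Fact.mk hℓ
  have ⟨e, _⟩ := h
  obtain ⟨w, hw0, hwP⟩ := exists_fin_two_ne_zero_ne (e ⟨P, hP ▸ addOrderOf_nsmul_eq_zero P⟩)
  have hQ : addOrderOf (e.symm w : Point (E.baseChange K)) = ℓ :=
    addOrderOf_eq_prime (e.symm w).2 (by simpa using hw0)
  obtain ⟨σ, hσ⟩ := exists_galHom_eq hℓ h hP hQ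
  refine ⟨σ, hσ ▸ fun hQP => hwP ?_⟩
  rw [← e.apply_symm_apply w]
  exact congrArg e (Subtype.ext hQP)

lemma galHom_map_ofId (σ : K ≃ₐ[k] K) (P : Point (E.baseChange k)) :
    galHom E σ (Point.map (W' := E) (Algebra.ofId k K) P) = Point.map (Algebra.ofId k K) P := by
  rw [galHom, Point.map_map, Subsingleton.elim (σ.toAlgHom.comp (Algebra.ofId k K))]

lemma eq_zero_of_nsmul_eq_zero_of_galoisImage
    (hρ : ∀ ℓ : ℕ, ℓ.Prime → GaloisImageContainsSL2Plus K E ℓ)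
    {P : Point (E.baseChange k)} {n : ℕ} (hn : 0 < n) (hnP : n • P = 0) : P = 0 := by
  by_contra hP0
  have hfin : IsOfFinAddOrder P := isOfFinAddOrder_iff_nsmul_eq_zero.2 ⟨n, hn, hnP⟩
  set ℓ := (addOrderOf P).minFac
  have hℓ : ℓ.Prime := Nat.minFac_prime (fun h => hP0 (AddMonoid.addOrderOf_eq_one_iff.1 h))
  set φ := Point.map (W' := E) (Algebra.ofId k K)
  have hQ : addOrderOf (φ ((addOrderOf P / ℓ) • P)) = ℓ := by
    rw [addOrderOf_injective φ (Point.map_injective _),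
      addOrderOf_nsmul_addOrderOf_sub hfin.addOrderOf_pos.ne' (Nat.minFac_dvd _)]
  obtain ⟨σ, hσ⟩ := exists_galHom_ne hℓ (hρ ℓ hℓ) hQ
  exact hσ (galHom_map_ofId σ _)

end Curve

open Matrix in
theorem stmt_10_general {k : Type*} [Field k] (E : WeierstrassCurve k)
    (hρ : ∀ ℓ : ℕ, ℓ.Prime →
      ∃ e : torsionSub (WeierstrassCurve.Affine.Point (E.baseChange (AlgebraicClosure k))) ℓ ≃+ (Fin 2 → ZMod ℓ),
        ∀ A ∈ SL2Plus ℓ, ∃ σ : AlgebraicClosure k ≃ₐ[k] AlgebraicClosure k,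
          ∀ P : torsionSub (WeierstrassCurve.Affine.Point (E.baseChange (AlgebraicClosure k))) ℓ, e (torsionGal E σ ℓ P) = A • e P) :
    (∀ M : AddSubgroup (WeierstrassCurve.Affine.Point (E.baseChange (AlgebraicClosure k))),
      (M : Set (WeierstrassCurve.Affine.Point (E.baseChange (AlgebraicClosure k)))).Finite →
      (∀ (σ : AlgebraicClosure k ≃ₐ[k] AlgebraicClosure k), ∀ P ∈ M, galHom E σ P ∈ M) →
      ∃ m : ℕ, 1 ≤ m ∧ M = torsionSub (WeierstrassCurve.Affine.Point (E.baseChange (AlgebraicClosure k))) m) ∧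
    (∀ P : WeierstrassCurve.Affine.Point (E.baseChange k), ∀ n : ℕ, 0 < n → n • P = 0 → P = 0) :=
  ⟨fun M hfin hstab =>
    have := hfin.to_subtype
    ⟨AddMonoid.exponent M, AddMonoid.exponent_pos.2 .of_finite,
      eq_torsionSub_exponent (isTransitiveOnPrimeTorsion_galHom hρ) hstab⟩,
    fun _ _ hn hnP => eq_zero_of_nsmul_eq_zero_of_galoisImage hρ hn hnP⟩

open Matrix in
/-- if `E` is an elliptic curve over a field `k` of characteristic zero whose
mod-`ℓ` Galois image contains `SL₂⁺(ℤ/ℓ)` for every prime `ℓ`, then every finite Galois-stable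
subgroup of `E(k̄)` is the full `m`-torsion subgroup `E[m]` for some `m ≥ 1`; in particular
`E(k)` is torsion-free. -/
theorem stmt_10 {k : Type*} [Field k] [CharZero k] (E : WeierstrassCurve k) (hΔ : E.Δ ≠ 0)
    (hρ : ∀ ℓ : ℕ, ℓ.Prime →
      ∃ e : torsionSub (WeierstrassCurve.Affine.Point (E.baseChange (AlgebraicClosure k))) ℓ ≃+ (Fin 2 → ZMod ℓ),
        ∀ A ∈ SL2Plus ℓ, ∃ σ : AlgebraicClosure k ≃ₐ[k] AlgebraicClosure k,
          ∀ P : torsionSub (WeierstrassCurve.Affine.Point (E.baseChange (AlgebraicClosure k))) ℓ, e (torsionGal E σ ℓ P) = A • e P) :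
    (∀ M : AddSubgroup (WeierstrassCurve.Affine.Point (E.baseChange (AlgebraicClosure k))),
      (M : Set (WeierstrassCurve.Affine.Point (E.baseChange (AlgebraicClosure k)))).Finite →
      (∀ (σ : AlgebraicClosure k ≃ₐ[k] AlgebraicClosure k), ∀ P ∈ M, galHom E σ P ∈ M) →
      ∃ m : ℕ, 1 ≤ m ∧ M = torsionSub (WeierstrassCurve.Affine.Point (E.baseChange (AlgebraicClosure k))) m) ∧
    (∀ P : WeierstrassCurve.Affine.Point (E.baseChange k), ∀ n : ℕ, 0 < n → n • P = 0 → P = 0) :=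
  stmt_10_general E hρ
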